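/- Let S and T be label cover structures such that there exists a homomorphism of label cover structures from S to π_P(T). Then for every structure B in a purely relational first-order language L there exists an L-homomorphism from π_B(S) to π_B(T). -/

import Mathlib

universe u v

/-- A *label cover structure* `S` consists of, for every finite type `Y`, a type
`S.elts Y` of elements of type `Y`, and, for every function `σ : Y → Z` between
finite types, a binary relation `S.rel σ` between elements of type `Y` and
elements of type `Z` (the constraints `E_σ`). -/
structure LabelCover : Type (u + 1) where
  elts : ∀ (Y : Type) [Fintype Y], Type u
  rel : ∀ {Y Z : Type} [Fintype Y] [Fintype Z], (Y → Z) → elts Y → elts Z → Prop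

/-- A homomorphism of label cover structures: a family of maps preserving the
types of elements and all constraints. -/
structure LCHom (S : LabelCover.{u}) (T : LabelCover.{v}) where
  app : ∀ (Y : Type) [Fintype Y], S.elts Y → T.elts Y
  map_rel : ∀ {Y Z : Type} [Fintype Y] [Fintype Z] (σ : Y → Z)
      (s : S.elts Y) (t : S.elts Z), S.rel σ s t → T.rel σ (app Y s) (app Z t)

/-- Pairs `(s, f)` of an element `s` of `S` of type `Y` together with a map
`f : Y → Z`; these represent elements of `π_P(S)` of type `Z` before taking
the quotient. -/
def PiPPair (S : LabelCover.{u}) (Z : Type) : Type (max 1 u) :=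
  Σ' (Y : Type) (iY : Fintype Y), @LabelCover.elts S Y iY × (Y → Z)

/-- The identifications generating the equivalence relation defining `π_P(S)`:
`(t, f)` is identified with `(s, f ∘ σ)` for every constraint `(s, t) ∈ E_σ^S`. -/
inductive PiPRel (S : LabelCover.{u}) (Z : Type) : PiPPair S Z → PiPPair S Z → Prop
  | mk {Y Y' : Type} (iY : Fintype Y) (iY' : Fintype Y') (σ : Y → Y')
      (s : @LabelCover.elts S Y iY) (t : @LabelCover.elts S Y' iY') (f : Y' → Z)
      (h : @LabelCover.rel S Y Y' iY iY' σ s t) :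
      PiPRel S Z ⟨Y, iY, (s, f ∘ σ)⟩ ⟨Y', iY', (t, f)⟩

/-- The label cover structure `π_P(S)`: its elements of type `Z` are the
classes `[s; f]` of pairs `(s, f)` with `s` an element of `S` of type `Y` and
`f : Y → Z`, under the equivalence generated by identifying `(t, f)` with
`(s, f ∘ σ)` for every constraint `(s, t) ∈ E_σ^S`; its constraints are
`E_{σ'} = { ([s; f], [s; σ' ∘ f]) }`. -/
def piP (S : LabelCover.{u}) : LabelCover.{max 1 u} where
  elts := fun Z [Fintype Z] => Quot (PiPRel S Z)
  rel := fun {Z Z'} [Fintype Z] [Fintype Z'] σ' a b =>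
    ∃ (Y : Type) (iY : Fintype Y) (s : @LabelCover.elts S Y iY) (f : Y → Z),
      a = Quot.mk _ ⟨Y, iY, (s, f)⟩ ∧ b = Quot.mk _ ⟨Y, iY, (s, σ' ∘ f)⟩

/-- The class `[s; f]` as an element of `π_P(S)` of type `Z`. -/
def piPmk (S : LabelCover.{u}) {Y Z : Type} [iY : Fintype Y] [Fintype Z]
    (s : S.elts Y) (f : Y → Z) : (piP S).elts Z :=
  Quot.mk _ ⟨Y, iY, (s, f)⟩

open FirstOrder

/-- Pairs `(s, b)` of an element `s` of `S` of type `Y` together with a map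
`b : Y → B`; these represent elements of the `L`-structure `π_B(S)` before
taking the quotient. -/
def PiBPair (S : LabelCover.{u}) (B : Type) : Type (max 1 u) :=
  Σ' (Y : Type) (iY : Fintype Y), @LabelCover.elts S Y iY × (Y → B)

/-- The identifications generating the equivalence relation defining `π_B(S)`:
`(t, b)` is identified with `(s, b ∘ σ)` for every constraint `(s, t) ∈ E_σ^S`. -/
inductive PiBRel (S : LabelCover.{u}) (B : Type) : PiBPair S B → PiBPair S B → Prop
  | mk {Y Z : Type} (iY : Fintype Y) (iZ : Fintype Z) (σ : Y → Z)
      (s : @LabelCover.elts S Y iY) (t : @LabelCover.elts S Z iZ) (b : Z → B)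
      (h : @LabelCover.rel S Y Z iY iZ σ s t) :
      PiBRel S B ⟨Y, iY, (s, b ∘ σ)⟩ ⟨Z, iZ, (t, b)⟩

/-- The carrier of the `L`-structure `π_B(S)`: the quotient of the set of pairs
`(s, b)` by the equivalence relation generated by identifying `(t, b)` with
`(s, b ∘ σ)` for every constraint `(s, t) ∈ E_σ^S`. -/
def PiB (S : LabelCover.{u}) (B : Type) : Type (max 1 u) :=
  Quot (PiBRel S B)

/-- The class `[s; b]` as an element of `π_B(S)`. -/
def piBmk (S : LabelCover.{u}) {B : Type} {Y : Type} [iY : Fintype Y]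
    (s : S.elts Y) (b : Y → B) : PiB S B :=
  Quot.mk _ ⟨Y, iY, (s, b)⟩

/-- The `L`-structure on `π_B(S)`: an `n`-ary relation symbol `R` holds on a
tuple if and only if the tuple can be written `([s; b 0], …, [s; b (n-1)])`
with a common element `s` of `S` of some type `Y` such that
`R^B (b 0 d, …, b (n-1) d)` holds for every `d : Y`. -/
instance piBStructure (L : Language) [L.IsRelational] (S : LabelCover.{u}) (B : Type)
    [L.Structure B] : L.Structure (PiB S B) where
  funMap := fun f _ => isEmptyElim f
  RelMap := fun {n} R v =>
    ∃ (Y : Type) (iY : Fintype Y) (s : @LabelCover.elts S Y iY) (b : Fin n → Y → B),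
      (∀ i, v i = Quot.mk _ ⟨Y, iY, (s, b i)⟩) ∧
      ∀ d : Y, Language.Structure.RelMap R (fun i => b i d)

/-!
A homomorphism `h : S → π_P(T)` sends each `s ∈ S_Y` to some `[s'; f]` with `s' ∈ T_{Y'}` and
`f : Y' → Y`, and we map `[s; b] ∈ π_B(S)` to `[s'; b ∘ f] ∈ π_B(T)`. This is well defined
because `h` maps a constraint `(s, t) ∈ E_σ^S` to a constraint of `π_P(T)`, i.e. to a pair
`([s'; f], [s'; σ ∘ f])`, whose images `[s'; b ∘ σ ∘ f]` agree. It preserves relations because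
precomposing all `b_i` with the same `f` keeps every column `(b_i (f d'))_i` among the columns
`(b_i d)_i`, which all satisfy `R`.
-/

/-- Each `[s; f] ∈ π_P(T)` of type `Y` sends `b : Y → B` to `[s; b ∘ f] ∈ π_B(T)`. -/
def piPToPiB (T : LabelCover.{u}) (B : Type) {Y : Type} [Fintype Y] :
    (piP T).elts Y → (Y → B) → PiB T B :=
  Quot.lift (fun p b => @piBmk T B p.1 p.2.1 p.2.2.1 (b ∘ p.2.2.2)) <| by
    rintro _ _ ⟨iY, iY', σ, s, t, f, hst⟩
    funext b
    exact Quot.sound (PiBRel.mk iY iY' σ s t (b ∘ f) hst)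

theorem piPToPiB_comp_of_rel (T : LabelCover.{u}) (B : Type) {Y Z : Type} [Fintype Y]
    [Fintype Z] {σ : Y → Z} {a : (piP T).elts Y} {c : (piP T).elts Z}
    (hac : (piP T).rel σ a c) (b : Z → B) :
    piPToPiB T B a (b ∘ σ) = piPToPiB T B c b := by
  obtain ⟨Y', iY', s, f, rfl, rfl⟩ := hac
  rfl

section Relations

open Language.Structure

variable {L : Language} [L.IsRelational] {S : LabelCover.{u}} {B : Type} [L.Structure B]

theorem relMap_piBmk {n : ℕ} (R : L.Relations n) {Y : Type} [Fintype Y] (s : S.elts Y)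
    {b : Fin n → Y → B} (hb : ∀ d, RelMap R fun i => b i d) :
    RelMap R fun i => piBmk S s (b i) :=
  ⟨Y, _, s, b, fun _ => rfl, hb⟩

theorem relMap_piPToPiB {n : ℕ} (R : L.Relations n) {Y : Type} [Fintype Y]
    (a : (piP S).elts Y) {b : Fin n → Y → B} (hb : ∀ d, RelMap R fun i => b i d) :
    RelMap R fun i => piPToPiB S B a (b i) := by
  induction a using Quot.ind with
  | mk p =>
    obtain ⟨Y', iY', s, f⟩ := p
    exact relMap_piBmk R s fun d => hb (f d)

end Relations

namespace LCHom

variable {S T : LabelCover.{u}}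

/-- The map `π_B(S) → π_B(T)`, `[s; b] ↦ [s'; b ∘ f]` where `h s = [s'; f]`. -/
def piBMap (h : LCHom S (piP T)) (B : Type) : PiB S B → PiB T B :=
  Quot.lift (fun p => @piPToPiB T B p.1 p.2.1 (@app S (piP T) h p.1 p.2.1 p.2.2.1) p.2.2.2) <| by
    rintro _ _ ⟨iY, iZ, σ, s, t, b, hst⟩
    exact @piPToPiB_comp_of_rel T B _ _ iY iZ σ _ _ (h.map_rel σ s t hst) b

theorem piBMap_piBmk (h : LCHom S (piP T)) (B : Type) {Y : Type} [Fintype Y] (s : S.elts Y)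
    (b : Y → B) : h.piBMap B (piBmk S s b) = piPToPiB T B (h.app Y s) b :=
  rfl

def piBHom (h : LCHom S (piP T)) (L : Language) [L.IsRelational] (B : Type) [L.Structure B] :
    PiB S B →[L] PiB T B where
  toFun := h.piBMap B
  map_fun' f := isEmptyElim f
  map_rel' := by
    rintro n R v ⟨Y, iY, s, b, hv, hb⟩
    obtain rfl : v = fun i => piBmk S s (b i) := funext hv
    simp only [Function.comp_def, piBMap_piBmk]
    exact relMap_piPToPiB R (h.app Y s) hb

end LCHom

/-- **Statement 8.** Let `S` and `T` be label cover structures such that there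
is a homomorphism of label cover structures from `S` to `π_P(T)`.  Then for
every structure `B` in a purely relational first-order language `L` there is an
`L`-homomorphism from `π_B(S)` to `π_B(T)`. -/
theorem piB_hom_of_piP_hom (S T : LabelCover.{u})
    (h : Nonempty (LCHom S (piP T))) :
    ∀ (L : Language) [L.IsRelational] (B : Type) [L.Structure B],
      Nonempty (PiB S B →[L] PiB T B) := by
  intro L _ B _
  exact h.map fun h => h.piBHom L B
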